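/- arXiv:1301.5625 — 2 statements merged into one kernel-verified Lean document; each statement's English description precedes it below -/
import Mathlib

section
/- Let k be a field, G a finite group, U ⊴ G a normal p-subgroup where char k = p, and J the radical of kU regarded as a kG-submodule of kG via conjugation action on U. Then for each i ≥ 0, the natural map (Jⁱ/Jⁱ⁺¹) ⊗_k (kG/JkG) → JⁱkG/Jⁱ⁺¹kG sending (j + Jⁱ⁺¹) ⊗ (x + JkG) to jx + Jⁱ⁺¹kG is an isomorphism of kG-modules. -/
/-!
Choose a right transversal `T` of `U` in `G`, so that `kG = ⊕_{t ∈ T} kU·t` as a left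
`kU`-module. Then `JⁱkG = ⊕_t Jⁱ·t`, and the images of the `t ∈ T` form a basis of `kG/JkG`,
which makes the layer map bijective. Concretely, a left inverse sends `Σ_t a_t·t` to
`Σ_t π(a_t) ⊗ t̄` for a linear retraction `π : kU → Jⁱ/Jⁱ⁺¹` killing `Jⁱ⁺¹`; it vanishes on
`Jⁱ⁺¹kG` and recovers `[j] ⊗ [x]` from `jx` because right multiplication by `kU` acts on
`Jⁱ/Jⁱ⁺¹` through the augmentation.
-/

open MonoidAlgebra TensorProduct

noncomputable section

variable {p : ℕ} [Fact p.Prime] (k : Type*) [Field k] [CharP k p]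
  (G : Type*) [Group G] [Fintype G] (U : Subgroup G) [U.Normal]

/-- The augmentation ideal `J = rad(kU)` of `kU`, as a `k`-submodule of `kU`. -/
def augIdeal : Submodule k (MonoidAlgebra k ↥U) :=
  Submodule.restrictScalars k (RingHom.ker ((MonoidAlgebra.lift k k ↥U) 1))

/-- The inclusion `kU → kG`. -/
def incl : MonoidAlgebra k ↥U →ₐ[k] MonoidAlgebra k G :=
  mapDomainAlgHom k k U.subtype

/-- The `k`-submodule `Jⁱ·kG` of `kG`. -/
def JiKG (i : ℕ) : Submodule k (MonoidAlgebra k G) :=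
  (Submodule.map (incl k G U).toLinearMap ((augIdeal k G U) ^ i)) *
    (⊤ : Submodule k (MonoidAlgebra k G))

/-- The `k`-module `Jⁱ/Jⁱ⁺¹`. -/
abbrev Jquot (i : ℕ) :=
  (((augIdeal k G U) ^ i : Submodule k (MonoidAlgebra k ↥U))) ⧸
    (Submodule.comap (((augIdeal k G U) ^ i : Submodule k (MonoidAlgebra k ↥U))).subtype
      ((augIdeal k G U) ^ (i + 1)))

theorem Submodule.exists_retraction_quotient_comap {K V : Type*} [DivisionRing K]
    [AddCommGroup V] [Module K V] (P Q : Submodule K V) :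
    ∃ π : V →ₗ[K] P ⧸ Q.comap P.subtype,
      (∀ x : P, π x = Submodule.Quotient.mk x) ∧ ∀ q ∈ Q, π q = 0 := by
  have hker : Q.comap P.subtype = LinearMap.ker (Q.mkQ ∘ₗ P.subtype) := by
    rw [LinearMap.ker_comp, Submodule.ker_mkQ]
  obtain ⟨σ, hσ⟩ := LinearMap.exists_leftInverse_of_injective _
    (Submodule.ker_liftQ_eq_bot' _ _ hker)
  refine ⟨σ ∘ₗ Q.mkQ, fun x ↦ LinearMap.congr_fun hσ (Submodule.Quotient.mk x), fun q hq ↦ ?_⟩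
  rw [LinearMap.comp_apply, Submodule.mkQ_apply, (Submodule.Quotient.mk_eq_zero Q).mpr hq,
    map_zero]

namespace MonoidAlgebra

variable {R G : Type*} [CommSemiring R] [Group G] {H : Subgroup G} {T : Set G}

/-- `kG ≅ kU ⊗ k[T]` as left `kU`-modules, with `k[T]` viewed inside `kG`. -/
def cosetDecomp (hT : Subgroup.IsComplement (H : Set G) T) : R[G] →ₗ[R] R[H] ⊗[R] R[G] :=
  (basis G R).constr R fun g ↦ single (hT.equiv g).1 1 ⊗ₜ single ((hT.equiv g).2 : G) 1

theorem cosetDecomp_single (hT : Subgroup.IsComplement (H : Set G) T) (g : G) (c : R) :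
    cosetDecomp hT (single g c) = single (hT.equiv g).1 c ⊗ₜ single ((hT.equiv g).2 : G) 1 := by
  rw [← mul_one c, ← smul_eq_mul, ← smul_single, ← basis_apply, map_smul, cosetDecomp,
    Module.Basis.constr_basis, smul_tmul', smul_single]

theorem cosetDecomp_mapDomain_mul (hT : Subgroup.IsComplement (H : Set G) T) (m : R[H])
    (x : R[G]) :
    cosetDecomp hT (mapDomainAlgHom R R H.subtype m * x)
      = (LinearMap.mulLeft R m).rTensor R[G] (cosetDecomp hT x) := by
  induction m using MonoidAlgebra.induction_linear with
  | zero => simp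
  | add a b ha hb =>
    have hadd : LinearMap.mulLeft R (a + b) = LinearMap.mulLeft R a + LinearMap.mulLeft R b :=
      LinearMap.ext fun _ ↦ add_mul a b _
    rw [map_add, add_mul, map_add, ha, hb, hadd, LinearMap.rTensor_add, LinearMap.add_apply]
  | single h a =>
    induction x using MonoidAlgebra.induction_linear with
    | zero => simp
    | add x y hx hy => rw [mul_add, map_add, hx, hy, map_add, map_add]
    | single g c =>
      simp [cosetDecomp_single, hT.equiv_mul_left]

end MonoidAlgebra

section Layers

variable {k G : Type*} [Field k] [Group G] {U : Subgroup G}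

theorem sub_algebraMap_lift_mem_augIdeal (y : MonoidAlgebra k U) :
    y - algebraMap k _ (MonoidAlgebra.lift k k U 1 y) ∈ augIdeal k G U := by
  change MonoidAlgebra.lift k k U 1 _ = 0
  rw [map_sub, AlgHom.commutes, Algebra.algebraMap_self, RingHom.id_apply, sub_self]

theorem augIdeal_mul_top_le : augIdeal k G U * ⊤ ≤ augIdeal k G U :=
  Submodule.mul_le.mpr fun a ha b _ ↦ by
    change MonoidAlgebra.lift k k U 1 (a * b) = 0
    rw [map_mul, show MonoidAlgebra.lift k k U 1 a = 0 from ha, zero_mul]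

theorem mul_mem_augIdeal_pow_succ {n : ℕ} {m : MonoidAlgebra k U}
    (hm : m ∈ augIdeal k G U ^ (n + 1)) (y : MonoidAlgebra k U) :
    m * y ∈ augIdeal k G U ^ (n + 1) := by
  have hle : augIdeal k G U ^ (n + 1) * ⊤ ≤ augIdeal k G U ^ (n + 1) := by
    rw [pow_succ, mul_assoc]
    gcongr
    exact augIdeal_mul_top_le
  exact hle (Submodule.mul_mem_mul hm trivial)

theorem incl_mul_mem_JiKG {n : ℕ} {m : MonoidAlgebra k U} (hm : m ∈ augIdeal k G U ^ n)
    (x : MonoidAlgebra k G) : incl k G U m * x ∈ JiKG k G U n :=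
  Submodule.mul_mem_mul (Submodule.mem_map_of_mem hm) trivial

theorem JiKG_le {n : ℕ} {N : Submodule k (MonoidAlgebra k G)}
    (h : ∀ m ∈ augIdeal k G U ^ n, ∀ x, incl k G U m * x ∈ N) : JiKG k G U n ≤ N :=
  Submodule.mul_le.mpr <| by
    rintro _ ⟨m, hm, rfl⟩ x -
    exact h m hm x

theorem incl_mul_mem_JiKG_succ {i : ℕ} {j : MonoidAlgebra k U} (hj : j ∈ augIdeal k G U ^ i)
    {x : MonoidAlgebra k G} (hx : x ∈ JiKG k G U 1) : incl k G U j * x ∈ JiKG k G U (i + 1) := by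
  suffices JiKG k G U 1 ≤ (JiKG k G U (i + 1)).comap (LinearMap.mulLeft k (incl k G U j)) from
    this hx
  refine JiKG_le fun m hm y ↦ ?_
  rw [Submodule.mem_comap, LinearMap.mulLeft_apply, ← mul_assoc, ← map_mul]
  refine incl_mul_mem_JiKG ?_ y
  rw [pow_succ]
  exact Submodule.mul_mem_mul hj (by rwa [pow_one] at hm)

variable (k G U) in
def layerMap (i : ℕ) :
    Jquot k G U i ⊗[k] (MonoidAlgebra k G ⧸ JiKG k G U 1) →ₗ[k]
      MonoidAlgebra k G ⧸ JiKG k G U (i + 1) :=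
  TensorProduct.lift <|
    LinearMap.liftQ₂ _ _
      ((LinearMap.mul k (MonoidAlgebra k G)).compr₂ (JiKG k G U (i + 1)).mkQ ∘ₗ
        (incl k G U).toLinearMap ∘ₗ (augIdeal k G U ^ i).subtype)
      (fun _ hj ↦ LinearMap.ext fun x ↦
        (Submodule.Quotient.mk_eq_zero _).mpr (incl_mul_mem_JiKG hj x))
      (fun _ hx ↦ LinearMap.ext fun j ↦
        (Submodule.Quotient.mk_eq_zero _).mpr (incl_mul_mem_JiKG_succ j.2 hx))

theorem layerMap_tmul {i : ℕ} (j : ↥(augIdeal k G U ^ i)) (x : MonoidAlgebra k G) :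
    layerMap k G U i (Submodule.Quotient.mk j ⊗ₜ Submodule.Quotient.mk x)
      = Submodule.Quotient.mk (incl k G U j * x) :=
  rfl

theorem apply_mul_eq_lift_smul {V : Type*} [AddCommGroup V] [Module k V] {i : ℕ}
    {π : MonoidAlgebra k U →ₗ[k] V} (hπ : ∀ m ∈ augIdeal k G U ^ (i + 1), π m = 0)
    {j : MonoidAlgebra k U} (hj : j ∈ augIdeal k G U ^ i) (y : MonoidAlgebra k U) :
    π (j * y) = MonoidAlgebra.lift k k U 1 y • π j := by
  have hsucc :
      j * (y - algebraMap k _ (MonoidAlgebra.lift k k U 1 y)) ∈ augIdeal k G U ^ (i + 1) := by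
    rw [pow_succ]
    exact Submodule.mul_mem_mul hj (sub_algebraMap_lift_mem_augIdeal y)
  have hsplit : j * y = j * (y - algebraMap k _ (MonoidAlgebra.lift k k U 1 y))
      + MonoidAlgebra.lift k k U 1 y • j := by
    rw [mul_sub, Algebra.smul_def, ← Algebra.commutes, sub_add_cancel]
  rw [hsplit, map_add, hπ _ hsucc, zero_add, map_smul]

theorem map_lift_mkQ_cosetDecomp {T : Set G} (hT : Subgroup.IsComplement (U : Set G) T)
    (x : MonoidAlgebra k G) :
    TensorProduct.map (MonoidAlgebra.lift k k U 1).toLinearMap (JiKG k G U 1).mkQ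
      (cosetDecomp hT x) = 1 ⊗ₜ Submodule.Quotient.mk x := by
  induction x using MonoidAlgebra.induction_linear with
  | zero => simp
  | add x y hx hy => rw [map_add, map_add, hx, hy, Submodule.Quotient.mk_add, tmul_add]
  | single g c =>
    set u := (hT.equiv g).1
    set t := ((hT.equiv g).2 : G)
    have hg : single g c - single t c = incl k G U (single u c - single 1 c) * single t 1 := by
      rw [map_sub, sub_mul]
      simpa [incl, u, t] using congrArg (single · c) (hT.equiv_fst_mul_equiv_snd g).symm
    have hu : single u c - single 1 c ∈ augIdeal k G U := by
      simpa using sub_algebraMap_lift_mem_augIdeal (G := G) (single u c)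
    rw [cosetDecomp_single, map_tmul, AlgHom.toLinearMap_apply, lift_single,
      MonoidHom.one_apply, smul_tmul, Submodule.mkQ_apply, ← Submodule.Quotient.mk_smul,
      smul_single, smul_eq_mul, mul_one, eq_comm]
    congr 1
    rw [Submodule.Quotient.eq, hg]
    exact incl_mul_mem_JiKG (by rwa [pow_one]) _

theorem exists_leftInverse_layerMap (i : ℕ) :
    ∃ θ : MonoidAlgebra k G ⧸ JiKG k G U (i + 1) →ₗ[k]
        Jquot k G U i ⊗[k] (MonoidAlgebra k G ⧸ JiKG k G U 1),
      θ ∘ₗ layerMap k G U i = LinearMap.id := by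
  obtain ⟨T, hT, -⟩ := U.exists_isComplement_right 1
  obtain ⟨π, hπ, hπ0⟩ :=
    Submodule.exists_retraction_quotient_comap (augIdeal k G U ^ i) (augIdeal k G U ^ (i + 1))
  let θ := TensorProduct.map π (JiKG k G U 1).mkQ ∘ₗ cosetDecomp hT
  have hθ (m : MonoidAlgebra k U) (x : MonoidAlgebra k G) :
      θ (incl k G U m * x) = TensorProduct.map (π ∘ₗ LinearMap.mulLeft k m) (JiKG k G U 1).mkQ
        (cosetDecomp hT x) := by
    rw [LinearMap.comp_apply, incl, cosetDecomp_mapDomain_mul, ← LinearMap.comp_apply,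
      LinearMap.map_comp_rTensor]
  have hθ0 : JiKG k G U (i + 1) ≤ LinearMap.ker θ := JiKG_le fun m hm x ↦ by
    have hπm : π ∘ₗ LinearMap.mulLeft k m = 0 :=
      LinearMap.ext fun y ↦ hπ0 _ (mul_mem_augIdeal_pow_succ hm y)
    rw [LinearMap.mem_ker, hθ, hπm, TensorProduct.map_zero_left, LinearMap.zero_apply]
  refine ⟨(JiKG k G U (i + 1)).liftQ θ hθ0, TensorProduct.ext' fun a b ↦ ?_⟩
  obtain ⟨j, rfl⟩ := Submodule.Quotient.mk_surjective _ a
  obtain ⟨x, rfl⟩ := Submodule.Quotient.mk_surjective _ b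
  have hπj : π ∘ₗ LinearMap.mulLeft k (j : MonoidAlgebra k U)
      = LinearMap.toSpanSingleton k _ (Submodule.Quotient.mk j) ∘ₗ
          (MonoidAlgebra.lift k k U 1).toLinearMap :=
    LinearMap.ext fun y ↦ by
      simp [apply_mul_eq_lift_smul hπ0 j.2 y, hπ]
  rw [LinearMap.comp_apply, layerMap_tmul, Submodule.liftQ_apply, hθ, hπj,
    ← LinearMap.rTensor_comp_map, LinearMap.comp_apply, map_lift_mkQ_cosetDecomp,
    LinearMap.rTensor_tmul, LinearMap.toSpanSingleton_apply, one_smul, LinearMap.id_apply]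

theorem layerMap_injective (i : ℕ) : Function.Injective (layerMap k G U i) := by
  obtain ⟨θ, hθ⟩ := exists_leftInverse_layerMap (k := k) (U := U) i
  exact Function.LeftInverse.injective (LinearMap.congr_fun hθ)

theorem range_layerMap (i : ℕ) :
    LinearMap.range (layerMap k G U i) = (JiKG k G U i).map (JiKG k G U (i + 1)).mkQ := by
  apply le_antisymm
  · rw [LinearMap.range_eq_map, ← TensorProduct.span_tmul_eq_top, Submodule.map_span,
      Submodule.span_le]
    rintro _ ⟨_, ⟨a, b, rfl⟩, rfl⟩
    obtain ⟨j, rfl⟩ := Submodule.Quotient.mk_surjective _ a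
    obtain ⟨x, rfl⟩ := Submodule.Quotient.mk_surjective _ b
    exact Submodule.mem_map_of_mem (incl_mul_mem_JiKG j.2 x)
  · rw [Submodule.map_le_iff_le_comap]
    exact JiKG_le fun m hm x ↦ ⟨Submodule.Quotient.mk ⟨m, hm⟩ ⊗ₜ Submodule.Quotient.mk x, rfl⟩

end Layers

/-- `JⁱkG/Jⁱ⁺¹kG` is modelled as the image of `JⁱkG` in `kG/Jⁱ⁺¹kG`; the last clause is
`G`-equivariance, for conjugation on `Jⁱ/Jⁱ⁺¹` and left multiplication on the other factors. -/
theorem jennings_layer_iso (i : ℕ) :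
    ∃ f : (Jquot k G U i) ⊗[k] (MonoidAlgebra k G ⧸ JiKG k G U 1)
        →ₗ[k] (MonoidAlgebra k G ⧸ JiKG k G U (i + 1)),
      (∀ (j : ((augIdeal k G U) ^ i : Submodule k (MonoidAlgebra k ↥U)))
          (x : MonoidAlgebra k G),
          f (Submodule.Quotient.mk j ⊗ₜ Submodule.Quotient.mk x)
            = Submodule.Quotient.mk ((incl k G U) ↑j * x)) ∧
      Function.Injective f ∧
      LinearMap.range f = Submodule.map (JiKG k G U (i + 1)).mkQ (JiKG k G U i) ∧
      (∀ (g : G) (j jc : ((augIdeal k G U) ^ i : Submodule k (MonoidAlgebra k ↥U)))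
          (x : MonoidAlgebra k G),
          (incl k G U) ↑jc
              = (MonoidAlgebra.of k G g) * (incl k G U) ↑j * (MonoidAlgebra.of k G g⁻¹) →
          f (Submodule.Quotient.mk jc
              ⊗ₜ Submodule.Quotient.mk ((MonoidAlgebra.of k G g) * x))
            = Submodule.Quotient.mk ((MonoidAlgebra.of k G g) * ((incl k G U) ↑j * x))) := by
  refine ⟨layerMap k G U i, layerMap_tmul, layerMap_injective i, range_layerMap i,
    fun g j jc x hjc ↦ ?_⟩
  rw [layerMap_tmul, hjc, mul_assoc, mul_assoc, ← mul_assoc (of k G g⁻¹), ← map_mul,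
    inv_mul_cancel, map_one, one_mul]

end
end

section
/- Let B be the 3×3 integer matrix [[9,18,0],[6,21,0],[0,0,27]] and C₁ = diag(3,1,3). Then for every n ≥ 1, B^{n-1}·C₁ equals (1/4)·[[3^{3n-2}+3^{n+1}, 3^{3n-2}-3^{n}, 0],[3^{3n-2}-3^{n}, 3^{3n-2}+3^{n-1}, 0],[0,0,4·3^{3n-2}]]. -/
lemma cartan_aux (m : ℕ) :
    (!![(9 : ℚ), 18, 0; 6, 21, 0; 0, 0, 27]) ^ m * !![(3 : ℚ), 0, 0; 0, 1, 0; 0, 0, 3]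
      = (1 / 4 : ℚ) •
        !![(3 : ℚ) ^ (3 * m + 1) + 3 ^ (m + 2), 3 ^ (3 * m + 1) - 3 ^ (m + 1), 0;
           3 ^ (3 * m + 1) - 3 ^ (m + 1), 3 ^ (3 * m + 1) + 3 ^ m, 0;
           0, 0, 4 * 3 ^ (3 * m + 1)] := by
  induction m with
  | zero =>
      ext i j
      fin_cases i <;> fin_cases j <;> norm_num
  | succ k ih =>
      rw [pow_succ', mul_assoc, ih]
      ext i j
      fin_cases i <;> fin_cases j <;>
        simp [Matrix.mul_apply, Fin.sum_univ_succ, pow_succ] <;> ring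

/-- Closed formula for `B^(n-1) * C₁` where `B = [[9,18,0],[6,21,0],[0,0,27]]`
and `C₁ = diag(3,1,3)`:  for every `n ≥ 1`,
`B^(n-1) * C₁ = (1/4) * [[3^(3n-2)+3^(n+1), 3^(3n-2)-3^n, 0],
                          [3^(3n-2)-3^n, 3^(3n-2)+3^(n-1), 0],
                          [0, 0, 4*3^(3n-2)]]`. -/
theorem cartan_matrix_closed_formula (n : ℕ) (hn : 1 ≤ n) :
    (!![(9 : ℚ), 18, 0; 6, 21, 0; 0, 0, 27]) ^ (n - 1) * !![(3 : ℚ), 0, 0; 0, 1, 0; 0, 0, 3]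
      = (1 / 4 : ℚ) •
        !![(3 : ℚ) ^ (3 * n - 2) + 3 ^ (n + 1), 3 ^ (3 * n - 2) - 3 ^ n, 0;
           3 ^ (3 * n - 2) - 3 ^ n, 3 ^ (3 * n - 2) + 3 ^ (n - 1), 0;
           0, 0, 4 * 3 ^ (3 * n - 2)] := by
  obtain ⟨m, rfl⟩ := Nat.exists_eq_add_of_le hn
  have h1 : 1 + m - 1 = m := by omega
  have h2 : 3 * (1 + m) - 2 = 3 * m + 1 := by omega
  have h3 : 1 + m + 1 = m + 2 := by omega
  have h4 : 1 + m = m + 1 := by omega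
  rw [h1, h2, h3, h4]
  exact cartan_aux m
end
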